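/- arXiv:2108.02086 — 5 statements merged into one kernel-verified Lean document; each statement's English description precedes it below -/
import Mathlib

section
/- Let O be a complete discrete valuation ring with uniformizer ϖ, fraction field K, and let K'/K be an unramified quadratic extension with ring of integers O' and Galois involution a ↦ ā. Let V be a finite-dimensional K'-vector space with a nondegenerate K'/K-Hermitian form, and let Λ ⊂ V be a full-rank O'-lattice satisfying Λ ⊆ Λ^∨ ⊆ ϖ^{-1}Λ, where Λ^∨ = {x ∈ V : (x, Λ) ⊆ O'}. If E ⊂ V is a totally isotropic K'-subspace, set Λ' := (E^⊥ ∩ Λ)/(E ∩ Λ), a lattice in the Hermitian space E^⊥/E with the induced Hermitian form. Then Λ' ⊆ (Λ')^∨ ⊆ ϖ^{-1}Λ'. -/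
/-!
Part (a) is just `Λ ⊆ Λ^∨`. For (b), let `x ∈ E^⊥` pair integrally with `E^⊥ ∩ Λ`. The image of
`Λ` in `V ⧸ E^⊥` is finitely generated and torsion-free over the PID `O`, hence free, so
`Λ → Λ ⧸ (E^⊥ ∩ Λ)` splits. Extending `φ(·, x)` from the image of a splitting to `V ⧸ E^⊥` gives a
functional `g` vanishing on `E^⊥` with `φ(·, x) - g` taking values in `φ(E^⊥ ∩ Λ, x)` on `Λ`.
In finite dimension the functionals vanishing on `E^⊥` are exactly the `φ(·, e)` with `e ∈ E`, so
`x - e ∈ Λ^∨` and `ϖ • (x - e) ∈ Λ`; it stays in `E^⊥` because `E` is isotropic.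
-/

theorem LinearIndependent.exists_dual_apply_eq {K V ι : Type*} [Field K] [AddCommGroup V]
    [Module K V] {v : ι → V} (hv : LinearIndependent K v) (c : ι → K) :
    ∃ g : Module.Dual K V, ∀ i, g (v i) = c i := by
  obtain ⟨g, hg⟩ := LinearMap.exists_extend ((Module.Basis.span hv).constr K c)
  refine ⟨g, fun i => ?_⟩
  simpa [Module.Basis.span_apply] using
    (DFunLike.congr_fun hg (Module.Basis.span hv i)).trans (Module.Basis.constr_basis _ _ _ _)

theorem Submodule.exists_extend_dual_of_free {O F M : Type*} [CommRing O] [IsDomain O] [Field F]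
    [Algebra O F] [IsFractionRing O F] [AddCommGroup M] [Module F M] [Module O M]
    [IsScalarTower O F M] (N : Submodule O M) [Module.Free O N] (f : N →ₗ[O] F) :
    ∃ g : Module.Dual F M, ∀ n : N, g n = f n := by
  let b := Module.Free.chooseBasis O N
  have hb : LinearIndependent F (fun i => (b i : M)) :=
    (b.linearIndependent.map' N.subtype N.ker_subtype).localization F (nonZeroDivisors O)
  obtain ⟨g, hg⟩ := hb.exists_dual_apply_eq (fun i => f (b i))
  exact ⟨g, DFunLike.congr_fun (b.ext (f₁ := g.restrictScalars O ∘ₗ N.subtype) hg)⟩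

theorem Submodule.orthogonalBilin_eq_dualCoannihilator_map {F V : Type*} [Field F]
    [AddCommGroup V] [Module F V] {σ : F →+* F} [RingHomSurjective σ]
    (B : V →ₛₗ[σ] Module.Dual F V) (E : Submodule F V) :
    E.orthogonalBilin B = (E.map B).dualCoannihilator := by
  ext; simp [Submodule.mem_dualCoannihilator]

theorem Submodule.dualAnnihilator_orthogonalBilin {F V : Type*} [Field F]
    [AddCommGroup V] [Module F V] [FiniteDimensional F V] {σ : F →+* F} [RingHomSurjective σ]
    (B : V →ₛₗ[σ] Module.Dual F V) (E : Submodule F V) :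
    (E.orthogonalBilin B).dualAnnihilator = E.map B := by
  rw [orthogonalBilin_eq_dualCoannihilator_map, Subspace.dualCoannihilator_dualAnnihilator_eq]

theorem Submodule.exists_mem_dualAnnihilator_sub_apply_eq {O F V : Type*} [CommRing O] [IsDomain O]
    [IsPrincipalIdealRing O] [Field F] [Algebra O F] [IsFractionRing O F] [AddCommGroup V]
    [Module F V] [Module O V] [IsScalarTower O F V] (Λ : Submodule O V) (hΛ : Λ.FG)
    (W : Submodule F V) (h : Module.Dual F V) :
    ∃ g ∈ W.dualAnnihilator, ∀ v ∈ Λ, ∃ w ∈ Λ, w ∈ W ∧ h v - g v = h w := by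
  let π : Λ →ₗ[O] V ⧸ W := W.mkQ.restrictScalars O ∘ₗ Λ.subtype
  have : Module.Finite O Λ := Module.Finite.iff_fg.mpr hΛ
  have : Module.IsTorsionFree O (V ⧸ W) := .trans_faithfulSMul O F _
  obtain ⟨s, hs⟩ := Module.projective_lifting_property π.rangeRestrict LinearMap.id
    π.surjective_rangeRestrict
  obtain ⟨g, hg⟩ := (LinearMap.range π).exists_extend_dual_of_free
    (h.restrictScalars O ∘ₗ Λ.subtype ∘ₗ s)
  refine ⟨g ∘ₗ W.mkQ, ?_, fun v hv => ?_⟩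
  · refine (Submodule.mem_dualAnnihilator _).mpr fun w hw => ?_
    simp [(Submodule.Quotient.mk_eq_zero W).mpr hw]
  set n := π.rangeRestrict ⟨v, hv⟩
  have hsn : W.mkQ (s n : V) = W.mkQ v := congrArg Subtype.val (LinearMap.congr_fun hs n)
  refine ⟨v - s n, Λ.sub_mem hv (s n).2, ?_, ?_⟩
  · rw [← Submodule.Quotient.mk_eq_zero, ← Submodule.mkQ_apply, map_sub, hsn, sub_self]
  · have hgv : g (W.mkQ v) = h (s n) := hg n
    rw [LinearMap.comp_apply, hgv, map_sub]

theorem stmt0_general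
    {O F V : Type*} [CommRing O] [IsDomain O] [IsDiscreteValuationRing O]
    [Field F] [Algebra O F] [IsFractionRing O F]
    (ϖ : O)
    (σ : F ≃+* F)
    [AddCommGroup V] [Module F V] [FiniteDimensional F V]
    [Module O V] [IsScalarTower O F V]
    (φ : V →ₗ[F] V →ₛₗ[(σ : F →+* F)] F)
    (hherm : ∀ x y : V, φ x y = σ (φ y x))
    (Λ : Submodule O V) (hfg : Λ.FG)
    -- `Λ ⊆ Λ^∨` :
    (hint : ∀ x ∈ Λ, ∀ y ∈ Λ, φ x y ∈ (algebraMap O F).range)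
    -- `Λ^∨ ⊆ ϖ⁻¹Λ` :
    (hvert : ∀ x : V, (∀ y ∈ Λ, φ x y ∈ (algebraMap O F).range) → ϖ • x ∈ Λ)
    (E : Subspace F V) (hiso : ∀ x ∈ E, ∀ y ∈ E, φ x y = 0) :
    -- (a)  `Λ' ⊆ Λ'^∨`
    (∀ x : V, x ∈ Λ → (∀ e ∈ E, φ x e = 0) →
      ∀ y : V, y ∈ Λ → (∀ e ∈ E, φ y e = 0) →
        φ x y ∈ (algebraMap O F).range) ∧
    -- (b)  `Λ'^∨ ⊆ ϖ⁻¹Λ'`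
    (∀ x : V, (∀ e ∈ E, φ x e = 0) →
      (∀ y : V, y ∈ Λ → (∀ e ∈ E, φ y e = 0) → φ x y ∈ (algebraMap O F).range) →
      ∃ z : V, z ∈ Λ ∧ (∀ e ∈ E, φ z e = 0) ∧ ∃ e ∈ E, ϖ • x = z + e) := by
  refine ⟨fun x hx _ y hy _ => hint x hx y hy, fun x hxE hxint => ?_⟩
  have : RingHomSurjective (σ : F →+* F) := ⟨σ.surjective⟩
  obtain ⟨g, hgE, hg⟩ := Λ.exists_mem_dualAnnihilator_sub_apply_eq hfg (E.orthogonalBilin φ.flip)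
    (φ.flip x)
  rw [Submodule.dualAnnihilator_orthogonalBilin] at hgE
  obtain ⟨e, heE, rfl⟩ := hgE
  have hdual : ∀ v ∈ Λ, φ (x - e) v ∈ (algebraMap O F).range := by
    intro v hv
    obtain ⟨w, hwΛ, hwE, hw⟩ := hg v hv
    have hpair : φ (x - e) v = φ x w := by
      rw [hherm, hherm x w, map_sub]
      exact congrArg σ hw
    rw [hpair]
    exact hxint w hwΛ (by simpa using hwE)
  refine ⟨ϖ • (x - e), hvert _ hdual, fun e' he' => ?_, ϖ • e, E.smul_of_tower_mem ϖ heE,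
    by rw [smul_sub, sub_add_cancel]⟩
  rw [← algebraMap_smul F ϖ (x - e), map_smul, map_sub, LinearMap.smul_apply,
    LinearMap.sub_apply, hxE e' he', hiso e heE e' he', sub_zero, smul_zero]

/-- Lemma 3.1, first part, of "More AFL conjectures: Bessel subgroups".
`O` is a complete discrete valuation ring (the ring of integers `O'` of the unramified
quadratic extension `K'/K`), `F = K'` its fraction field, `ϖ` a uniformizer, `σ` the Galois
involution of `K'/K` (preserving `O`).  `V` is a finite-dimensional `F`-vector space equipped
with a nondegenerate `σ`-Hermitian form `φ`, and `Λ` is a full-rank `O`-lattice with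
`Λ ⊆ Λ^∨ ⊆ ϖ⁻¹Λ`, where `Λ^∨ = {x | φ(x,Λ) ⊆ O}`.  For a totally isotropic subspace `E`,
the induced lattice `Λ' = (E^⊥ ∩ Λ)/(E ∩ Λ)` in `E^⊥/E` (with the induced Hermitian form)
again satisfies `Λ' ⊆ Λ'^∨ ⊆ ϖ⁻¹Λ'`.  Everything about the quotient `E^⊥/E` is expressed in
terms of representatives lying in `E^⊥ = {x | ∀ y ∈ E, φ x y = 0}`:
(a) `Λ' ⊆ Λ'^∨`: the form is integral on `E^⊥ ∩ Λ`;
(b) `Λ'^∨ ⊆ ϖ⁻¹Λ'`: if `x ∈ E^⊥` pairs integrally with all of `E^⊥ ∩ Λ`, then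
    `ϖ • x ∈ (E^⊥ ∩ Λ) + E`, i.e. the class of `ϖ • x` lies in `Λ'`. -/
theorem stmt0
    {O F V : Type*} [CommRing O] [IsDomain O] [IsDiscreteValuationRing O]
    [IsAdicComplete (IsLocalRing.maximalIdeal O) O]
    [Field F] [Algebra O F] [IsFractionRing O F]
    (ϖ : O) (hϖ : Irreducible ϖ)
    (σ : F ≃+* F) (hσinv : ∀ x, σ (σ x) = x)
    (hσO : ∀ a : O, σ (algebraMap O F a) ∈ (algebraMap O F).range)
    [AddCommGroup V] [Module F V] [FiniteDimensional F V]
    [Module O V] [IsScalarTower O F V]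
    (φ : V →ₗ[F] V →ₛₗ[(σ : F →+* F)] F)
    (hherm : ∀ x y : V, φ x y = σ (φ y x))
    (hnd : ∀ x : V, (∀ y : V, φ x y = 0) → x = 0)
    (Λ : Submodule O V) (hfg : Λ.FG)
    (hfull : Submodule.span F (Λ : Set V) = ⊤)
    -- `Λ ⊆ Λ^∨` :
    (hint : ∀ x ∈ Λ, ∀ y ∈ Λ, φ x y ∈ (algebraMap O F).range)
    -- `Λ^∨ ⊆ ϖ⁻¹Λ` :
    (hvert : ∀ x : V, (∀ y ∈ Λ, φ x y ∈ (algebraMap O F).range) → ϖ • x ∈ Λ)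
    (E : Subspace F V) (hiso : ∀ x ∈ E, ∀ y ∈ E, φ x y = 0) :
    -- (a)  `Λ' ⊆ Λ'^∨`
    (∀ x : V, x ∈ Λ → (∀ e ∈ E, φ x e = 0) →
      ∀ y : V, y ∈ Λ → (∀ e ∈ E, φ y e = 0) →
        φ x y ∈ (algebraMap O F).range) ∧
    -- (b)  `Λ'^∨ ⊆ ϖ⁻¹Λ'`
    (∀ x : V, (∀ e ∈ E, φ x e = 0) →
      (∀ y : V, y ∈ Λ → (∀ e ∈ E, φ y e = 0) → φ x y ∈ (algebraMap O F).range) →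
      ∃ z : V, z ∈ Λ ∧ (∀ e ∈ E, φ z e = 0) ∧ ∃ e ∈ E, ϖ • x = z + e) :=
  stmt0_general ϖ σ φ hherm Λ hfg hint hvert E hiso
end

section
/- With the notation of the previous statement (unramified quadratic extension O ⊂ O', Hermitian space V, totally isotropic subspace E, and lattice Λ with Λ ⊆ Λ^∨ ⊆ ϖ^{-1}Λ), if moreover Λ = Λ^∨ (Λ is self-dual), then the induced lattice Λ' = (E^⊥ ∩ Λ)/(E ∩ Λ) in E^⊥/E is also self-dual: Λ' = (Λ')^∨. -/
/-!
Let `x ∈ E^⊥` pair integrally with `Λ ∩ E^⊥`. Over the principal ideal domain `O` the sublattice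
`Λ ∩ E^⊥` is saturated in `Λ`, hence a direct summand, so the functional `φ(·, x)` restricted to
`E^⊥` extends to a functional on `V` that is still integral on `Λ`. By nondegeneracy it is
`φ(·, w)` for some `w`, self-duality puts `w` in `Λ`, and `x - w`, being orthogonal to `E^⊥`,
lies in `E^⊥⊥ = E`.
-/

open Module Submodule

namespace LinearMap

variable {F V : Type*} [Field F] [AddCommGroup V] [Module F V] [FiniteDimensional F V]
  {σ : F ≃+* F} {φ : V →ₗ[F] V →ₛₗ[(σ : F →+* F)] F}

theorem SeparatingLeft.flip_surjective (hφ : φ.SeparatingLeft) : Function.Surjective φ.flip := by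
  have hcoann : (range φ.flip).dualCoannihilator = ⊥ := by
    refine eq_bot_iff.2 fun v hv => (mem_bot F).2 (hφ v fun w => ?_)
    exact (mem_dualCoannihilator v).1 hv _ (mem_range_self φ.flip w)
  rw [← range_eq_top, ← Subspace.dualCoannihilator_dualAnnihilator_eq (W := range φ.flip),
    hcoann, dualAnnihilator_bot]

theorem mem_of_forall_orthogonal_apply_eq_zero (hφ : φ.SeparatingLeft) (hrefl : φ.IsRefl)
    {E : Submodule F V} {z : V}
    (hz : ∀ v ∈ E.orthogonalBilin φ.flip, φ v z = 0) : z ∈ E := by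
  by_contra hzE
  obtain ⟨f, hfz, hfE⟩ := E.exists_dual_map_eq_bot_of_notMem hzE inferInstance
  obtain ⟨u, rfl⟩ := hφ.flip_surjective f
  have huE : u ∈ E.orthogonalBilin φ.flip := fun e he =>
    hrefl _ _ <| le_ker_iff_map.2 hfE he
  exact hfz (hrefl _ _ (hz u huE))

end LinearMap

theorem Submodule.exists_retraction_of_projective_quotient {R P : Type*} [Ring R]
    [AddCommGroup P] [Module R P] (M : Submodule R P) [Module.Projective R (P ⧸ M)] :
    ∃ r : P →ₗ[R] M, ∀ m : M, r m = m := by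
  obtain ⟨s, hs⟩ := M.mkQ.exists_rightInverse_of_surjective M.range_mkQ
  have hmem : ∀ y, y - s (M.mkQ y) ∈ M := fun y => by
    rw [← Submodule.Quotient.mk_eq_zero, ← mkQ_apply, map_sub, ← LinearMap.comp_apply, hs,
      LinearMap.id_apply, sub_self]
  refine ⟨(LinearMap.id - s ∘ₗ M.mkQ).codRestrict M hmem, fun m => ?_⟩
  ext
  simp [(Submodule.Quotient.mk_eq_zero M).2 m.2]

section Lattice

variable {O F V : Type*} [CommRing O] [Field F] [Algebra O F] [IsFractionRing O F]
  [AddCommGroup V] [Module F V] [Module O V] [IsScalarTower O F V]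

theorem exists_smul_mem_of_span_eq_top {Λ : Submodule O V} (hΛ : span F (Λ : Set V) = ⊤)
    (v : V) : ∃ c ∈ nonZeroDivisors O, c • v ∈ Λ := by
  obtain ⟨y, hy, c, rfl⟩ := (IsLocalization.mem_span_iff (nonZeroDivisors O)).1
    (hΛ ▸ mem_top : v ∈ span F (Λ : Set V))
  rw [span_eq] at hy
  refine ⟨c, c.2, ?_⟩
  rwa [← algebraMap_smul F (c : O), smul_smul, IsLocalization.mul_mk'_eq_mk'_of_mul, mul_one,
    IsLocalization.mk'_self, one_smul]

theorem LinearMap.exists_extend_of_span_eq_top {N : Type*} [AddCommGroup N] [Module F N]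
    [Module O N] [IsScalarTower O F N] {Λ : Submodule O V} [Module.Free O Λ]
    (hΛ : span F (Λ : Set V) = ⊤) (g : Λ →ₗ[O] N) : ∃ G : V →ₗ[F] N, ∀ y : Λ, G y = g y := by
  let b := Module.Free.chooseBasis O Λ
  have hli : LinearIndependent F (Λ.subtype ∘ b) :=
    (b.linearIndependent.map' Λ.subtype Λ.ker_subtype).localization F (nonZeroDivisors O)
  have hspan : ⊤ ≤ span F (Set.range (Λ.subtype ∘ b)) := by
    have hΛb : (Λ : Set V) ⊆ span O (Set.range (Λ.subtype ∘ b)) := by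
      rw [Set.range_comp, ← map_span, b.span_eq, Submodule.map_top, range_subtype]
    rw [← hΛ]
    exact span_le.2 (hΛb.trans (span_le_restrictScalars O F _))
  let bV := Basis.mk hli hspan
  refine ⟨bV.constr F (g ∘ b), fun y => ?_⟩
  have : (bV.constr F (g ∘ b)).restrictScalars O ∘ₗ Λ.subtype = g :=
    b.ext fun i => by
      rw [LinearMap.comp_apply, subtype_apply, restrictScalars_apply,
        show (b i : V) = bV i from (Basis.mk_apply hli hspan i).symm, Basis.constr_basis]
      rfl
  exact LinearMap.congr_fun this y

variable [IsDomain O]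

theorem LinearMap.eqOn_of_eqOn_inter {N : Type*} [AddCommGroup N] [Module F N]
    {Λ : Submodule O V} (hΛ : span F (Λ : Set V) = ⊤) {W : Submodule F V} {f g : V →ₗ[F] N}
    (h : Set.EqOn f g (Λ ∩ W)) : Set.EqOn f g W := by
  intro v hv
  obtain ⟨c, hc, hcv⟩ := exists_smul_mem_of_span_eq_top hΛ v
  have hc' : algebraMap O F c ≠ 0 := IsFractionRing.to_map_ne_zero_of_mem_nonZeroDivisors hc
  have hcfg := h ⟨hcv, (W.restrictScalars O).smul_mem c hv⟩
  rw [← algebraMap_smul F c v, map_smul, map_smul] at hcfg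
  exact smul_right_injective N hc' hcfg

theorem isTorsionFree_quotient_comap_subtype (Λ : Submodule O V) (W : Submodule F V) :
    IsTorsionFree O (Λ ⧸ (W.restrictScalars O).comap Λ.subtype) := by
  have : IsTorsionFree O (V ⧸ W) := .trans F
  let f : Λ →ₗ[O] V ⧸ W := W.mkQ.restrictScalars O ∘ₗ Λ.subtype
  have hker : (W.restrictScalars O).comap Λ.subtype = LinearMap.ker f := by ext; simp [f]
  refine Function.Injective.moduleIsTorsionFree _ ?_ (map_smul (liftQ _ f hker.le))
  exact LinearMap.ker_eq_bot.1 (ker_liftQ_eq_bot' _ f hker)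

theorem LinearMap.exists_eqOn_mapsTo_image_inter [IsPrincipalIdealRing O] {N : Type*}
    [AddCommGroup N] [Module F N] [Module O N] [IsScalarTower O F N]
    {Λ : Submodule O V} (hfg : Λ.FG) (hΛ : span F (Λ : Set V) = ⊤) (W : Submodule F V)
    (f : V →ₗ[F] N) :
    ∃ G : V →ₗ[F] N, Set.EqOn G f W ∧ Set.MapsTo G Λ (f '' (Λ ∩ W)) := by
  let M : Submodule O Λ := (W.restrictScalars O).comap Λ.subtype
  have : Module.Finite O Λ := Module.Finite.iff_fg.2 hfg
  have : IsTorsionFree O V := .trans F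
  have : IsTorsionFree O (Λ ⧸ M) := isTorsionFree_quotient_comap_subtype Λ W
  obtain ⟨r, hr⟩ := M.exists_retraction_of_projective_quotient
  obtain ⟨G, hG⟩ := exists_extend_of_span_eq_top hΛ
    (f.restrictScalars O ∘ₗ Λ.subtype ∘ₗ M.subtype ∘ₗ r)
  refine ⟨G, eqOn_of_eqOn_inter hΛ fun y ⟨hy, hyW⟩ => ?_, fun y hy => ?_⟩
  · rw [hG ⟨y, hy⟩]
    simp [hr ⟨⟨y, hy⟩, hyW⟩]
  · exact ⟨r ⟨y, hy⟩, ⟨(r ⟨y, hy⟩ : Λ).2, (r ⟨y, hy⟩).2⟩, (hG ⟨y, hy⟩).symm⟩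

end Lattice

theorem stmt1_general
    {O F V : Type*} [CommRing O] [IsDomain O] [IsDiscreteValuationRing O]
    [Field F] [Algebra O F] [IsFractionRing O F]
    (σ : F ≃+* F)
    [AddCommGroup V] [Module F V] [FiniteDimensional F V]
    [Module O V] [IsScalarTower O F V]
    (φ : V →ₗ[F] V →ₛₗ[(σ : F →+* F)] F)
    (hherm : ∀ x y : V, φ x y = σ (φ y x))
    (hnd : ∀ x : V, (∀ y : V, φ x y = 0) → x = 0)
    (Λ : Submodule O V) (hfg : Λ.FG)
    (hfull : Submodule.span F (Λ : Set V) = ⊤)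
    -- `Λ ⊆ Λ^∨` :
    (hint : ∀ x ∈ Λ, ∀ y ∈ Λ, φ x y ∈ (algebraMap O F).range)
    -- `Λ^∨ ⊆ Λ`, so that together with `hint`, `Λ = Λ^∨` is self-dual:
    (hsd : ∀ x : V, (∀ y ∈ Λ, φ x y ∈ (algebraMap O F).range) → x ∈ Λ)
    (E : Subspace F V) (hiso : ∀ x ∈ E, ∀ y ∈ E, φ x y = 0) :
    -- (a)  `Λ' ⊆ Λ'^∨`
    (∀ x : V, x ∈ Λ → (∀ e ∈ E, φ x e = 0) →
      ∀ y : V, y ∈ Λ → (∀ e ∈ E, φ y e = 0) →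
        φ x y ∈ (algebraMap O F).range) ∧
    -- (b)  `Λ'^∨ ⊆ Λ'`
    (∀ x : V, (∀ e ∈ E, φ x e = 0) →
      (∀ y : V, y ∈ Λ → (∀ e ∈ E, φ y e = 0) → φ x y ∈ (algebraMap O F).range) →
      ∃ z : V, z ∈ Λ ∧ (∀ e ∈ E, φ z e = 0) ∧ ∃ e ∈ E, x = z + e) := by
  refine ⟨fun x hx _ y hy _ => hint x hx y hy, fun x hxE hxint => ?_⟩
  have hrefl : φ.IsRefl := fun u v h => by rw [hherm, h, map_zero]
  obtain ⟨G, hGx, hGΛ⟩ :=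
    (φ.flip x).exists_eqOn_mapsTo_image_inter hfg hfull (E.orthogonalBilin φ.flip)
  obtain ⟨w, rfl⟩ := LinearMap.SeparatingLeft.flip_surjective hnd G
  have hwΛ : w ∈ Λ := hsd w fun y hy => by
    obtain ⟨z, ⟨hzΛ, hzE⟩, hz⟩ := hGΛ hy
    have hwy : φ w y = φ x z :=
      calc φ w y = σ (φ y w) := hherm w y
        _ = σ (φ z x) := congrArg σ hz.symm
        _ = φ x z := (hherm x z).symm
    exact hwy ▸ hxint z hzΛ hzE
  have hxw : x - w ∈ E := LinearMap.mem_of_forall_orthogonal_apply_eq_zero hnd hrefl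
    fun v hv => by rw [map_sub]; exact sub_eq_zero.2 (hGx hv).symm
  refine ⟨w, hwΛ, fun e he => ?_, x - w, hxw, by abel⟩
  have := hiso _ hxw e he
  rwa [map_sub, LinearMap.sub_apply, hxE e he, zero_sub, neg_eq_zero] at this

/-- Lemma 3.1, second part.  Same setup as Statement 0: unramified
quadratic extension with integers `O`, Galois involution `σ`, nondegenerate Hermitian
space `(V, φ)`, totally isotropic subspace `E`, full-rank lattice `Λ`.  If moreover `Λ` is
self-dual (`Λ = Λ^∨`), then the induced lattice `Λ' = (E^⊥ ∩ Λ)/(E ∩ Λ)` in `E^⊥/E` is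
also self-dual.  In terms of representatives in `E^⊥ = {x | ∀ y ∈ E, φ x y = 0}`:
(a) `Λ' ⊆ Λ'^∨`, and (b) `Λ'^∨ ⊆ Λ'`: any `x ∈ E^⊥` pairing integrally with `E^⊥ ∩ Λ`
satisfies `x ∈ (E^⊥ ∩ Λ) + E`. -/
theorem stmt1
    {O F V : Type*} [CommRing O] [IsDomain O] [IsDiscreteValuationRing O]
    [IsAdicComplete (IsLocalRing.maximalIdeal O) O]
    [Field F] [Algebra O F] [IsFractionRing O F]
    (ϖ : O) (hϖ : Irreducible ϖ)
    (σ : F ≃+* F) (hσinv : ∀ x, σ (σ x) = x)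
    (hσO : ∀ a : O, σ (algebraMap O F a) ∈ (algebraMap O F).range)
    [AddCommGroup V] [Module F V] [FiniteDimensional F V]
    [Module O V] [IsScalarTower O F V]
    (φ : V →ₗ[F] V →ₛₗ[(σ : F →+* F)] F)
    (hherm : ∀ x y : V, φ x y = σ (φ y x))
    (hnd : ∀ x : V, (∀ y : V, φ x y = 0) → x = 0)
    (Λ : Submodule O V) (hfg : Λ.FG)
    (hfull : Submodule.span F (Λ : Set V) = ⊤)
    -- `Λ ⊆ Λ^∨` :
    (hint : ∀ x ∈ Λ, ∀ y ∈ Λ, φ x y ∈ (algebraMap O F).range)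
    -- `Λ^∨ ⊆ Λ`, so that together with `hint`, `Λ = Λ^∨` is self-dual:
    (hsd : ∀ x : V, (∀ y ∈ Λ, φ x y ∈ (algebraMap O F).range) → x ∈ Λ)
    (E : Subspace F V) (hiso : ∀ x ∈ E, ∀ y ∈ E, φ x y = 0) :
    -- (a)  `Λ' ⊆ Λ'^∨`
    (∀ x : V, x ∈ Λ → (∀ e ∈ E, φ x e = 0) →
      ∀ y : V, y ∈ Λ → (∀ e ∈ E, φ y e = 0) →
        φ x y ∈ (algebraMap O F).range) ∧
    -- (b)  `Λ'^∨ ⊆ Λ'`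
    (∀ x : V, (∀ e ∈ E, φ x e = 0) →
      (∀ y : V, y ∈ Λ → (∀ e ∈ E, φ y e = 0) → φ x y ∈ (algebraMap O F).range) →
      ∃ z : V, z ∈ Λ ∧ (∀ e ∈ E, φ z e = 0) ∧ ∃ e ∈ E, x = z + e) :=
  stmt1_general σ φ hherm hnd Λ hfg hfull hint hsd E hiso
end

section
/- Let O be a principal ideal domain, ϖ ∈ O a prime element, Λ a finite free O-module, and α : Λ ↪ Λ* an injective map with cokernel Λ*/α(Λ) annihilated by ϖ. Suppose M ⊆ Λ is a saturated isotropic submodule (as in the previous statement), with induced maps β : M → (Λ/M)* and β* : (Λ/M)* → M*, and suppose β is injective. Then the module coker(β)/ (ker(β*)/M considered inside coker(β)) is annihilated by ϖ; in particular if α is an isomorphism then ker(β*)/M ≅ coker(β), i.e. the induced pairing on ker(β*)/M is perfect. -/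
/-- final step of the proof of Lemma 3.1.  `O` a PID, `ϖ ∈ O` a prime
element, `Λ` finite free, `α : Λ ↪ Λ*` injective with `coker α = Λ*/α(Λ)` annihilated by
`ϖ`.  With `M ⊆ Λ` saturated and isotropic and induced maps `β : M → (Λ/M)*`,
`β* : Λ/M → M*` as in Statement 2, and `β` injective, the quotient
`coker(β)/(ker β* inside coker β)` is annihilated by `ϖ`: every `f ∈ (Λ/M)*` satisfies
`ϖ • f ≡ δ(class)` modulo `range β`, i.e. there are `x ∈ Λ` and a lift `g ∈ (Λ/M)*` of
`α x` (forcing `β*(x̄) = 0`) with `ϖ • f - g ∈ range β`.  In particular, if `α` is an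
isomorphism, then `ker(β*) ≅ coker(β)` via the connecting map, i.e. the same holds with
`ϖ • f` replaced by `f`: the induced pairing on `ker(β*)/M` is perfect. -/
theorem stmt3
    {O Λ : Type*} [CommRing O] [IsDomain O] [IsPrincipalIdealRing O]
    [AddCommGroup Λ] [Module O Λ] [Module.Free O Λ] [Module.Finite O Λ]
    (ϖ : O) (hϖ : Prime ϖ)
    (α : Λ →ₗ[O] Module.Dual O Λ) (hα : Function.Injective α)
    (hcoker : ∀ f : Module.Dual O Λ, ϖ • f ∈ LinearMap.range α)
    (M : Submodule O Λ)
    (hsat : ∀ (c : O) (x : Λ), c • x ∈ M → c ≠ 0 → x ∈ M)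
    (hiso : ∀ m ∈ M, ∀ m' ∈ M, α m m' = 0)
    (β : M →ₗ[O] Module.Dual O (Λ ⧸ M))
    (hβ : ∀ (m : M) (x : Λ), β m (Submodule.Quotient.mk x) = α (m : Λ) x)
    (hβinj : Function.Injective β)
    (βs : (Λ ⧸ M) →ₗ[O] Module.Dual O M)
    (hβs : ∀ (x : Λ) (m : M), βs (Submodule.Quotient.mk x) m = α x (m : Λ)) :
    -- `ϖ` annihilates `coker(β) / (ker(β*)/M)`
    (∀ f : Module.Dual O (Λ ⧸ M),
      ∃ (x : Λ) (g : Module.Dual O (Λ ⧸ M)),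
        (∀ z : Λ, g (Submodule.Quotient.mk z) = α x z) ∧
        ϖ • f - g ∈ LinearMap.range β) ∧
    -- if `α` is an isomorphism then `ker(β*) ≅ coker(β)`, i.e. the connecting map is onto
    (Function.Bijective α →
      ∀ f : Module.Dual O (Λ ⧸ M),
        ∃ (x : Λ) (g : Module.Dual O (Λ ⧸ M)),
          (∀ z : Λ, g (Submodule.Quotient.mk z) = α x z) ∧
          f - g ∈ LinearMap.range β) := by
  constructor
  · intro f
    obtain ⟨x, hx⟩ := hcoker (f.comp M.mkQ)
    have hker : M ≤ LinearMap.ker (α x) := by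
      intro m hm
      have : α x m = (ϖ • f.comp M.mkQ) m := by rw [hx]
      simp only [LinearMap.smul_apply, LinearMap.comp_apply, Submodule.mkQ_apply] at this
      have hm0 : (Submodule.Quotient.mk m : Λ ⧸ M) = 0 :=
        (Submodule.Quotient.mk_eq_zero M).2 hm
      rw [hm0] at this
      simpa using this
    refine ⟨x, M.liftQ (α x) hker, fun z => Submodule.liftQ_apply _ _ _, 0, ?_⟩
    have : ϖ • f = M.liftQ (α x) hker := by
      apply LinearMap.ext
      intro q
      obtain ⟨z, rfl⟩ := Submodule.Quotient.mk_surjective M q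
      have := LinearMap.congr_fun hx z
      simpa using this.symm
    rw [← this]; simp
  · intro hbij f
    obtain ⟨x, hx⟩ := hbij.2 (f.comp M.mkQ)
    have hker : M ≤ LinearMap.ker (α x) := by
      intro m hm
      have : α x m = (f.comp M.mkQ) m := by rw [hx]
      simp only [LinearMap.comp_apply, Submodule.mkQ_apply] at this
      have hm0 : (Submodule.Quotient.mk m : Λ ⧸ M) = 0 :=
        (Submodule.Quotient.mk_eq_zero M).2 hm
      rw [hm0] at this
      simpa using this
    refine ⟨x, M.liftQ (α x) hker, fun z => Submodule.liftQ_apply _ _ _, 0, ?_⟩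
    have : f = M.liftQ (α x) hker := by
      apply LinearMap.ext
      intro q
      obtain ⟨z, rfl⟩ := Submodule.Quotient.mk_surjective M q
      have := LinearMap.congr_fun hx z
      simpa using this.symm
    rw [← this]; simp
end

section
/- Let F/F₀ be an unramified quadratic extension of p-adic fields with Galois involution a ↦ ā and uniformizer ϖ of F₀. Let V̄ be a vector space over the completion F̆ of the maximal unramified extension of F, equipped with a σ-sesquilinear pairing {·,·} descending from a Hermitian form on an F-space 𝕍 (so {x,y} is O_F̆-linear in x and σ-semilinear in y), and let Φ = id ⊗ σ be the Frobenius-semilinear automorphism fixing 𝕍. Let A ⊂ V̄ be a special lattice, i.e. an O_F̆-lattice with A^∨ ⊆ A, dim_𝔽(A/A^∨) = 1, and A ⊆ ϖ^{-1}A^∨, where A^∨ = {x : {x, A} ⊆ O_F̆} and (A^∨)^∨ = Φ(A). If u ∈ 𝕍 satisfies (u,u) ∈ O_F and u ∈ A, then u ∈ A^∨. -/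
/-!
Since `u` is `Φ`-fixed, `u = Φ u ∈ Φ(A) = (A^∨)^∨`, so `{u, A^∨}` is integral. If `u ∉ A^∨`, then
`A = O u + A^∨` because `A / A^∨` is a line, and `{u, c u + w} = σ(c) {u, u} + {u, w}` is integral
as soon as `σ` preserves `O`, forcing `u ∈ A^∨` after all. That `σ` preserves `O` is itself
forced by the lattice conditions: for `d ∈ O`, `σ(d) u = Φ(d u) ∈ (A^∨)^∨`, so `σ(d)ⁿ s ∈ O`
for all `n` and a fixed nonzero `s`, i.e. `σ(d)` is almost integral, hence integral over `O`.
-/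

theorem mem_range_algebraMap_of_smul_mem_range {R K : Type*} [CommRing R] [IsDomain R]
    [IsNoetherianRing R] [IsIntegrallyClosed R] [Field K] [Algebra R K] [IsFractionRing R K]
    (f : R →+* K) {r : R} (hr : r ≠ 0) (h : ∀ c, r • f c ∈ (algebraMap R K).range) (c : R) :
    f c ∈ (algebraMap R K).range := by
  have hc : IsAlmostIntegral R (f c) :=
    ⟨r, mem_nonZeroDivisors_of_ne_zero hr, fun n => by simpa only [map_pow] using h (c ^ n)⟩
  exact IsIntegrallyClosed.isIntegral_iff.mp hc.isIntegral

section SpecialLattice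

variable {O K V : Type*} [CommRing O] [Field K] [Algebra O K]
  [AddCommGroup V] [Module K V] [Module O V] [IsScalarTower O K V]
  {τ : K ≃+* K} (φ : V →ₗ[K] V →ₛₗ[(τ : K →+* K)] K)

def latticeDual (A : Submodule O V) : Set V :=
  {x | ∀ y ∈ A, φ x y ∈ (algebraMap O K).range}

variable {φ}

theorem pairing_smul_right (x y : V) (c : O) :
    φ x (c • y) = τ (algebraMap O K c) * φ x y := by
  rw [← algebraMap_smul K c y, (φ x).map_smulₛₗ, smul_eq_mul]
  rfl

theorem frobenius_mem_range_of_bidual [IsDomain O] [IsNoetherianRing O]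
    [IsIntegrallyClosed O] [IsFractionRing O K] {Φ : V → V}
    (hΦsemilin : ∀ (c : K) (x : V), Φ (c • x) = τ c • Φ x) {A : Submodule O V}
    (hbidual : ∀ a ∈ A, ∀ w ∈ latticeDual φ A, φ (Φ a) w ∈ (algebraMap O K).range)
    {u w : V} (hu𝕍 : Φ u = u) (huA : u ∈ A) (hw : w ∈ latticeDual φ A) (huw : φ u w ≠ 0)
    (d : O) : τ (algebraMap O K d) ∈ (algebraMap O K).range := by
  obtain ⟨r, hr⟩ : φ u w ∈ (algebraMap O K).range := hu𝕍 ▸ hbidual u huA w hw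
  have hr0 : r ≠ 0 := by rintro rfl; exact huw (by simp [← hr])
  refine mem_range_algebraMap_of_smul_mem_range ((τ : K →+* K).comp (algebraMap O K)) hr0
    (fun c => ?_) d
  have hΦ : Φ (c • u) = τ (algebraMap O K c) • u := by
    rw [← algebraMap_smul K c u, hΦsemilin, hu𝕍]
  have := hbidual _ (A.smul_mem c huA) w hw
  rw [hΦ, φ.map_smulₛₗ, LinearMap.smul_apply, smul_eq_mul, ← hr] at this
  simpa [Algebra.smul_def, mul_comm] using this

theorem mem_latticeDual_of_forall_sub_smul_mem
    (hτ : ∀ d : O, τ (algebraMap O K d) ∈ (algebraMap O K).range) {A : Submodule O V} {u : V}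
    (hnorm : φ u u ∈ (algebraMap O K).range)
    (hbidual : ∀ w ∈ latticeDual φ A, φ u w ∈ (algebraMap O K).range)
    (hspan : ∀ x ∈ A, ∃ c : O, x - c • u ∈ latticeDual φ A) :
    u ∈ latticeDual φ A := by
  intro x hx
  obtain ⟨c, hc⟩ := hspan x hx
  have hsplit : φ u x = φ u (x - c • u) + τ (algebraMap O K c) * φ u u := by
    rw [← pairing_smul_right, ← map_add, sub_add_cancel]
  rw [hsplit]
  exact add_mem (hbidual _ hc) (mul_mem (hτ c) hnorm)

end SpecialLattice

theorem stmt5_general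
    {O K V : Type*} [CommRing O] [IsDomain O] [IsDiscreteValuationRing O]
    [Field K] [Algebra O K] [IsFractionRing O K]
    (ϖ : O) (hϖ : Irreducible ϖ)
    (τ : K ≃+* K)
    [AddCommGroup V] [Module K V] [Module O V] [IsScalarTower O K V]
    (φ : V →ₗ[K] V →ₛₗ[(τ : K →+* K)] K)
    (Φ : V → V)
    (hΦsemilin : ∀ (c : K) (x : V), Φ (c • x) = τ c • Φ x)
    (A : Submodule O V)
    (hcodim1 : ∀ a ∈ A, ¬ (∀ y ∈ A, φ a y ∈ (algebraMap O K).range) →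
      ∀ x ∈ A, ∃ c : O, ∀ y ∈ A, φ (x - c • a) y ∈ (algebraMap O K).range)
    -- `A ⊆ ϖ⁻¹ A^∨`:
    (hmod : ∀ x ∈ A, ∀ y ∈ A, φ (ϖ • x) y ∈ (algebraMap O K).range)
    -- `(A^∨)^∨ = Φ(A)`:
    (hbidual : ∀ x : V,
      ((∀ y : V, (∀ z ∈ A, φ y z ∈ (algebraMap O K).range) →
          φ x y ∈ (algebraMap O K).range) ↔ ∃ a ∈ A, Φ a = x))
    (u : V) (hu𝕍 : Φ u = u)
    (hnorm : φ u u ∈ (algebraMap O K).range)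
    (huA : u ∈ A) :
    ∀ y ∈ A, φ u y ∈ (algebraMap O K).range := by
  have hΦA : ∀ a ∈ A, ∀ w ∈ latticeDual φ A, φ (Φ a) w ∈ (algebraMap O K).range :=
    fun a ha => (hbidual (Φ a)).mpr ⟨a, ha, rfl⟩
  by_contra hu
  obtain ⟨y, hyA, hy⟩ : ∃ y ∈ A, φ u y ∉ (algebraMap O K).range := by simpa using hu
  have huϖy : φ u (ϖ • y) ≠ 0 := by
    rw [pairing_smul_right]
    refine mul_ne_zero ?_ fun h => hy (h ▸ zero_mem _)
    simpa using hϖ.ne_zero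
  have hτ := frobenius_mem_range_of_bidual hΦsemilin hΦA hu𝕍 huA (hmod y hyA) huϖy
  exact hu (mem_latticeDual_of_forall_sub_smul_mem hτ hnorm (hu𝕍 ▸ hΦA u huA)
    (hcodim1 u huA hu))

/-- the Claim in the proof of Proposition 5.2.  `K = F̆` is the
completion of the maximal unramified extension, with ring of integers `O = O_F̆`,
uniformizer `ϖ` and Frobenius `τ = σ`.  `V̄` is a `K`-vector space with a `σ`-sesquilinear
pairing `φ = {·,·}` (linear in the first variable, `τ`-semilinear in the second), and
`Φ = id ⊗ σ` is the `τ`-semilinear automorphism whose fixed vectors contain the Hermitian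
space `𝕍`.  `A ⊂ V̄` is a special lattice: `A^∨ ⊆ A`, `dim_𝔽(A/A^∨) = 1`,
`A ⊆ ϖ⁻¹A^∨` and `(A^∨)^∨ = Φ(A)`, where `A^∨ = {x | {x, A} ⊆ O}`.
If `u` is `Φ`-fixed (i.e. `u ∈ 𝕍`) with integral norm `{u,u} ∈ O` and `u ∈ A`,
then `u ∈ A^∨`. -/
theorem stmt5
    {O K V : Type*} [CommRing O] [IsDomain O] [IsDiscreteValuationRing O]
    [Field K] [Algebra O K] [IsFractionRing O K]
    (ϖ : O) (hϖ : Irreducible ϖ)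
    (τ : K ≃+* K)
    [AddCommGroup V] [Module K V] [Module O V] [IsScalarTower O K V]
    (φ : V →ₗ[K] V →ₛₗ[(τ : K →+* K)] K)
    (Φ : V → V) (hΦadd : ∀ x y : V, Φ (x + y) = Φ x + Φ y)
    (hΦsemilin : ∀ (c : K) (x : V), Φ (c • x) = τ c • Φ x)
    (hΦbij : Function.Bijective Φ)
    (A : Submodule O V) (hAfg : A.FG) (hAfull : Submodule.span K (A : Set V) = ⊤)
    -- `A^∨ ⊆ A`:
    (hdual_le : ∀ x : V, (∀ y ∈ A, φ x y ∈ (algebraMap O K).range) → x ∈ A)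
    -- `A ≠ A^∨` and `dim_𝔽 (A / A^∨) = 1`:
    (hne : ∃ a ∈ A, ¬ (∀ y ∈ A, φ a y ∈ (algebraMap O K).range))
    (hcodim1 : ∀ a ∈ A, ¬ (∀ y ∈ A, φ a y ∈ (algebraMap O K).range) →
      ∀ x ∈ A, ∃ c : O, ∀ y ∈ A, φ (x - c • a) y ∈ (algebraMap O K).range)
    -- `A ⊆ ϖ⁻¹ A^∨`:
    (hmod : ∀ x ∈ A, ∀ y ∈ A, φ (ϖ • x) y ∈ (algebraMap O K).range)
    -- `(A^∨)^∨ = Φ(A)`: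
    (hbidual : ∀ x : V,
      ((∀ y : V, (∀ z ∈ A, φ y z ∈ (algebraMap O K).range) →
          φ x y ∈ (algebraMap O K).range) ↔ ∃ a ∈ A, Φ a = x))
    (u : V) (hu𝕍 : Φ u = u)
    (hnorm : φ u u ∈ (algebraMap O K).range)
    (huA : u ∈ A) :
    ∀ y ∈ A, φ u y ∈ (algebraMap O K).range :=
  stmt5_general ϖ hϖ τ φ Φ hΦsemilin A hcodim1 hmod hbidual u hu𝕍 hnorm huA
end

section
/- In the setting of the previous statement (V = W ⊕ L, dim V = m+1, ξ regular), the GL(W)-conjugation orbit of ξ is uniquely determined by the 2(m+1) invariants: the coefficients of the characteristic polynomial of ξ and the values e^∨(ξ^i e) for i = 0, 1, …, 2m. More precisely: if ξ, ξ' are both regular and e^∨(ξ^i e) = e^∨(ξ'^i e) for all 0 ≤ i ≤ 2m and ξ, ξ' have the same characteristic polynomial, then there exists h ∈ GL(W) with hξh^{-1} = ξ'. -/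
/-!
Since `e` is a cyclic vector for both `ξ` and `ξ'`, the map `h` sending the basis
`(ξ ^ i e)_{i ≤ m}` to `(ξ' ^ i e)_{i ≤ m}` is a linear automorphism fixing `e`. Reducing `X ^ i`
modulo the common characteristic polynomial (Cayley–Hamilton) shows `h (ξ ^ i e) = ξ' ^ i e` for
every `i`, so `h` intertwines `ξ` and `ξ'`. Matching the values `e^∨ (ξ ^ i e)` gives
`e^∨ ∘ h = e^∨`, so `h` preserves `ker e^∨`, which is `W`.
-/

open Polynomial Module Submodule

namespace LinearMap

section CommRing

variable {R V V' : Type*} [CommRing R] [AddCommGroup V] [Module R V] [AddCommGroup V'] [Module R V']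

theorem apply_aeval_apply_eq_of_pow_apply_eq (f : V →ₗ[R] V') {ξ : V →ₗ[R] V}
    {ξ' : V' →ₗ[R] V'} {e : V} {e' : V'} {n : ℕ} (hf : ∀ i < n, f ((ξ ^ i) e) = (ξ' ^ i) e')
    {p : R[X]} (hp : p.natDegree < n) : f (aeval ξ p e) = aeval ξ' p e' := by
  rw [p.as_sum_range' n hp]
  simp only [map_sum, aeval_monomial, coe_sum, Finset.sum_apply, End.mul_apply,
    Module.algebraMap_end_apply, map_smul]
  exact Finset.sum_congr rfl fun i hi => by rw [hf i (Finset.mem_range.mp hi)]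

theorem comp_eq_of_pow_apply_eq {ι : Type*} (f : V →ₗ[R] V') {ξ : V →ₗ[R] V}
    {ξ' : V' →ₗ[R] V'} {e : V} {e' : V'} {k : ι → ℕ}
    (hspan : span R (Set.range fun i => (ξ ^ k i) e) = ⊤)
    (hf : ∀ i : ℕ, f ((ξ ^ i) e) = (ξ' ^ i) e') : f ∘ₗ ξ = ξ' ∘ₗ f :=
  ext_on_range hspan fun i => by
    rw [comp_apply, comp_apply, ← End.mul_apply, ← pow_succ', hf, hf, pow_succ', End.mul_apply]

variable [Module.Free R V] [Module.Finite R V]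

theorem aeval_modByMonic_charpoly (ξ : V →ₗ[R] V) (p : R[X]) :
    aeval ξ (p %ₘ ξ.charpoly) = aeval ξ p :=
  aeval_modByMonic_eq_self_of_root ξ.aeval_self_charpoly

end CommRing

variable {F V : Type*} [Field F] [AddCommGroup V] [Module F V]

theorem natDegree_modByMonic_charpoly_lt [FiniteDimensional F V] [Nontrivial V] (ξ : V →ₗ[F] V)
    (p : F[X]) : (p %ₘ ξ.charpoly).natDegree < finrank F V := by
  have hne : ξ.charpoly ≠ 1 := fun h1 => by
    have := ξ.charpoly_natDegree
    rw [h1, natDegree_one] at this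
    exact finrank_pos.ne this
  simpa [ξ.charpoly_natDegree] using natDegree_modByMonic_lt p ξ.charpoly_monic hne

theorem exists_linearEquiv_pow_apply_eq_of_charpoly_eq [FiniteDimensional F V] {n : ℕ}
    (hn : finrank F V = n) {ξ ξ' : V →ₗ[F] V} {e : V}
    (hξ : span F (Set.range fun i : Fin n => (ξ ^ (i : ℕ)) e) = ⊤)
    (hξ' : span F (Set.range fun i : Fin n => (ξ' ^ (i : ℕ)) e) = ⊤)
    (hchar : ξ.charpoly = ξ'.charpoly) :
    ∃ h : V ≃ₗ[F] V, ∀ i : ℕ, h ((ξ ^ i) e) = (ξ' ^ i) e := by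
  rcases subsingleton_or_nontrivial V with _ | _
  · exact ⟨LinearEquiv.refl F V, fun _ => Subsingleton.elim _ _⟩
  have hcard : Fintype.card (Fin n) = finrank F V := by simp [hn]
  let b := basisOfTopLeSpanOfCardEqFinrank _ hξ.ge hcard
  let b' := basisOfTopLeSpanOfCardEqFinrank _ hξ'.ge hcard
  let h := b.equiv b' (Equiv.refl _)
  have hlow : ∀ i < n, h ((ξ ^ i) e) = (ξ' ^ i) e := fun i hi => by
    simpa [b, b', coe_basisOfTopLeSpanOfCardEqFinrank] using b.equiv_apply ⟨i, hi⟩ b' (.refl _)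
  refine ⟨h, fun i => ?_⟩
  calc h ((ξ ^ i) e) = h (aeval ξ (X ^ i %ₘ ξ.charpoly) e) := by
        rw [aeval_modByMonic_charpoly, aeval_X_pow]
    _ = aeval ξ' (X ^ i %ₘ ξ.charpoly) e :=
        apply_aeval_apply_eq_of_pow_apply_eq _ hlow (hn ▸ natDegree_modByMonic_charpoly_lt ξ _)
    _ = (ξ' ^ i) e := by rw [hchar, aeval_modByMonic_charpoly, aeval_X_pow]

theorem eq_ker_of_isCompl_span_singleton {W : Submodule F V} {e : V} {φ : V →ₗ[F] F}
    (hcompl : IsCompl W (span F {e})) (he : φ e ≠ 0) (hW : ∀ w ∈ W, φ w = 0) :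
    W = ker φ := by
  refine le_antisymm (fun w hw => hW w hw) fun x hx => ?_
  obtain ⟨w, hw, y, hy, rfl⟩ := mem_sup.mp (hcompl.sup_eq_top ▸ mem_top : x ∈ W ⊔ span F {e})
  obtain ⟨c, rfl⟩ := mem_span_singleton.mp hy
  have hc : c = 0 := by simpa [hW w hw, he] using (mem_ker.mp hx)
  simpa [hc] using hw

theorem map_ker_eq_of_comp_eq {φ : V →ₗ[F] F} (h : V ≃ₗ[F] V) (hφ : φ ∘ₗ h = φ) :
    map (h : V →ₗ[F] V) (ker φ) = ker φ := by
  have hφ' : φ ∘ₗ (h.symm : V →ₗ[F] V) = φ := by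
    conv_lhs => rw [← hφ]
    ext x
    simp
  rw [map_equiv_eq_comap_symm, ← ker_comp, hφ']

end LinearMap

open LinearMap in
theorem stmt14_general
    {F V : Type*} [Field F] [AddCommGroup V] [Module F V] [FiniteDimensional F V]
    (m : ℕ) (hdim : Module.finrank F V = m + 1)
    (W L : Submodule F V) (hcompl : IsCompl W L)
    (e : V) (hL : L = Submodule.span F {e})
    (edual : V →ₗ[F] F) (hedual_e : edual e = 1) (hedual_W : ∀ w ∈ W, edual w = 0)
    (ξ ξ' : V →ₗ[F] V)
    -- regularity of `ξ` and `ξ'` :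
    (hreg₁ : Submodule.span F (Set.range fun i : Fin (m + 1) => (ξ ^ (i : ℕ)) e) = ⊤)
    (hreg₁' : Submodule.span F (Set.range fun i : Fin (m + 1) => (ξ' ^ (i : ℕ)) e) = ⊤)
    -- matching invariants :
    (hchar : LinearMap.charpoly ξ = LinearMap.charpoly ξ')
    (hinv : ∀ i : ℕ, i ≤ 2 * m → edual ((ξ ^ i) e) = edual ((ξ' ^ i) e)) :
    ∃ h : V ≃ₗ[F] V,
      Submodule.map (h : V →ₗ[F] V) W = W ∧
      (∀ x ∈ L, h x = x) ∧
      (∀ x : V, h (ξ x) = ξ' (h x)) := by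
  obtain ⟨h, hpow⟩ := exists_linearEquiv_pow_apply_eq_of_charpoly_eq hdim hreg₁ hreg₁' hchar
  have hdual : edual ∘ₗ (h : V →ₗ[F] V) = edual := ext_on_range hreg₁ fun i => by
    simp [hpow, hinv i (by omega)]
  have hW : W = ker edual :=
    eq_ker_of_isCompl_span_singleton (hL ▸ hcompl) (by simp [hedual_e]) hedual_W
  refine ⟨h, by rw [hW, map_ker_eq_of_comp_eq h hdual], ?_,
    fun x => LinearMap.congr_fun (comp_eq_of_pow_apply_eq _ hreg₁ hpow) x⟩
  rintro x hx
  obtain ⟨c, rfl⟩ := mem_span_singleton.mp (hL ▸ hx)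
  simpa using congrArg (c • ·) (hpow 0)

/-- regular orbits are determined by their invariants, §5.3.
With `V = W ⊕ L`, `dim_F V = m + 1`, `L = F·e` and `e^∨` as in Statement 13, suppose
`ξ, ξ'` are both regular endomorphisms with the same characteristic polynomial and with
matching invariants `e^∨(ξ^i e) = e^∨(ξ'^i e)` for `0 ≤ i ≤ 2m`.  Then they are conjugate
under `GL(W)`: there is `h ∈ GL(V)` preserving `W`, fixing `L` pointwise, with
`h ξ h⁻¹ = ξ'`. -/
theorem stmt14
    {F V : Type*} [Field F] [AddCommGroup V] [Module F V] [FiniteDimensional F V]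
    (m : ℕ) (hdim : Module.finrank F V = m + 1)
    (W L : Submodule F V) (hcompl : IsCompl W L)
    (e : V) (hL : L = Submodule.span F {e})
    (edual : V →ₗ[F] F) (hedual_e : edual e = 1) (hedual_W : ∀ w ∈ W, edual w = 0)
    (ξ ξ' : V →ₗ[F] V)
    -- regularity of `ξ` and `ξ'` :
    (hreg₁ : Submodule.span F (Set.range fun i : Fin (m + 1) => (ξ ^ (i : ℕ)) e) = ⊤)
    (hreg₂ : Submodule.span F
      (Set.range fun i : Fin (m + 1) => edual ∘ₗ (ξ ^ (i : ℕ))) = ⊤)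
    (hreg₁' : Submodule.span F (Set.range fun i : Fin (m + 1) => (ξ' ^ (i : ℕ)) e) = ⊤)
    (hreg₂' : Submodule.span F
      (Set.range fun i : Fin (m + 1) => edual ∘ₗ (ξ' ^ (i : ℕ))) = ⊤)
    -- matching invariants :
    (hchar : LinearMap.charpoly ξ = LinearMap.charpoly ξ')
    (hinv : ∀ i : ℕ, i ≤ 2 * m → edual ((ξ ^ i) e) = edual ((ξ' ^ i) e)) :
    ∃ h : V ≃ₗ[F] V,
      Submodule.map (h : V →ₗ[F] V) W = W ∧
      (∀ x ∈ L, h x = x) ∧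
      (∀ x : V, h (ξ x) = ξ' (h x)) :=
  stmt14_general m hdim W L hcompl e hL edual hedual_e hedual_W ξ ξ' hreg₁ hreg₁' hchar hinv
end
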